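/- arXiv:2101.11288 — 2 statements merged into one kernel-verified Lean document; each statement's English description precedes it below -/
import Mathlib

section
/- The set L_d of d×d bracelet matrices is star-shaped with respect to the flat matrix W_d: if B is a bracelet matrix, then for every λ ∈ [0,1] the matrix (1−λ)B + λW_d is also a bracelet matrix. -/
/-!
Mixing with `W_d` replaces two columns (or rows) `u = x²`, `v = y²` of `B` by `a u + c`,
`a v + c` with `a, c ≥ 0`. Since `(a x² + c)(a y² + c) = (a x y + c)² + a c (x - y)²`, the
number `√((a u_j + c)(a v_j + c))` is the modulus of
`w_j = (a x_j y_j + c) + i √(ac) |x_j - y_j| ∈ ℂ`. As all `w_j` lie in the first quadrant,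
`|w_{j₀}| ≤ |∑_{j ≠ j₀} w_j|` follows by comparing real and imaginary parts, using the bracelet
inequalities of the pairs `(u, v)`, `(u, u)` and `(v, v)`; the triangle inequality
`|∑_{j ≠ j₀} w_j| ≤ ∑_{j ≠ j₀} |w_j|` then gives the bracelet inequality of the mixture.
-/

/-- A `d × d` real matrix is bistochastic (doubly stochastic) if all its entries are
non-negative and each row and each column sums to `1`. -/
def Bistochastic {d : ℕ} (B : Matrix (Fin d) (Fin d) ℝ) : Prop :=
  (∀ j k, 0 ≤ B j k) ∧ (∀ j, ∑ k, B j k = 1) ∧ (∀ k, ∑ j, B j k = 1)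

/-- A bistochastic matrix is bracelet if for every pair of columns `k, l` and every `j₀`,
`2 √(B j₀ k * B j₀ l) ≤ ∑ j, √(B j k * B j l)` (equivalently, twice the maximum is at most
the sum), and the analogous condition holds for every pair of rows. -/
def Bracelet {d : ℕ} (B : Matrix (Fin d) (Fin d) ℝ) : Prop :=
  Bistochastic B ∧
  (∀ k l j₀ : Fin d, 2 * Real.sqrt (B j₀ k * B j₀ l) ≤ ∑ j, Real.sqrt (B j k * B j l)) ∧
  (∀ j k l₀ : Fin d, 2 * Real.sqrt (B j l₀ * B k l₀) ≤ ∑ l, Real.sqrt (B j l * B k l))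

/-- The flat (van der Waerden) matrix `W_d` with all entries equal to `1/d`. -/
noncomputable def flatMatrix (d : ℕ) : Matrix (Fin d) (Fin d) ℝ := Matrix.of fun _ _ => (1 : ℝ) / d

open Finset

lemma bistochastic_iff_mem_doublyStochastic {d : ℕ} {B : Matrix (Fin d) (Fin d) ℝ} :
    Bistochastic B ↔ B ∈ doublyStochastic ℝ (Fin d) :=
  mem_doublyStochastic_iff_sum.symm

lemma flatMatrix_mem_doublyStochastic (d : ℕ) :
    flatMatrix d ∈ doublyStochastic ℝ (Fin d) := by
  rw [mem_doublyStochastic_iff_sum]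
  refine ⟨fun _ _ => by simp [flatMatrix], fun i => ?_, fun j => ?_⟩ <;>
  · have : (d : ℝ) ≠ 0 := Nat.cast_ne_zero.2 (Fin.pos ‹Fin d›).ne'
    simp [flatMatrix, this]

lemma smul_add_smul_flatMatrix_apply {d : ℕ} (B : Matrix (Fin d) (Fin d) ℝ) (a b : ℝ)
    (j k : Fin d) : (a • B + b • flatMatrix d) j k = a * B j k + b / d := by
  simp [flatMatrix, div_eq_mul_inv]

def IsBraceletPair {ι : Type*} [Fintype ι] (u v : ι → ℝ) : Prop :=
  ∀ j₀, 2 * √(u j₀ * v j₀) ≤ ∑ j, √(u j * v j)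

lemma bracelet_iff {d : ℕ} {B : Matrix (Fin d) (Fin d) ℝ} :
    Bracelet B ↔ Bistochastic B ∧ (∀ k l, IsBraceletPair (B · k) (B · l)) ∧
      ∀ j k, IsBraceletPair (B j) (B k) :=
  Iff.rfl

lemma mul_add_mul_add_eq_sq_add_sq {a c : ℝ} (hac : 0 ≤ a * c) (x y : ℝ) :
    (a * x ^ 2 + c) * (a * y ^ 2 + c) = (a * (x * y) + c) ^ 2 + (√(a * c) * |x - y|) ^ 2 := by
  rw [mul_pow, sq_abs, Real.sq_sqrt hac]
  ring

lemma two_mul_sqrt_sq_add_sq_le_sum {ι : Type*} [Fintype ι] [DecidableEq ι]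
    (A s : ι → ℝ) (j₀ : ι)
    (h : A j₀ ^ 2 + s j₀ ^ 2 ≤ (∑ j ∈ univ.erase j₀, A j) ^ 2 + (∑ j ∈ univ.erase j₀, s j) ^ 2) :
    2 * √(A j₀ ^ 2 + s j₀ ^ 2) ≤ ∑ j, √(A j ^ 2 + s j ^ 2) := by
  set E := univ.erase j₀
  have htriangle : √((∑ j ∈ E, A j) ^ 2 + (∑ j ∈ E, s j) ^ 2) ≤ ∑ j ∈ E, √(A j ^ 2 + s j ^ 2) := by
    have := norm_sum_le E fun j => (A j : ℂ) + s j * Complex.I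
    simpa only [sum_add_distrib, ← sum_mul, ← Complex.ofReal_sum, Complex.norm_add_mul_I]
      using this
  rw [← add_sum_erase _ _ (mem_univ j₀)]
  linarith [Real.sqrt_le_sqrt h]

lemma sum_sq_add_sq_le_sq_sum_abs_sub_add {ι : Type*} (E : Finset ι) (x y : ι → ℝ) :
    ∑ j ∈ E, (x j ^ 2 + y j ^ 2) ≤ (∑ j ∈ E, |x j - y j|) ^ 2 + 2 * ∑ j ∈ E, x j * y j := by
  have := sum_sq_le_sq_sum_of_nonneg (s := E) (f := fun j => |x j - y j|) fun j _ => abs_nonneg _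
  have hexp : ∑ j ∈ E, |x j - y j| ^ 2 = ∑ j ∈ E, (x j ^ 2 + y j ^ 2) - 2 * ∑ j ∈ E, x j * y j := by
    simp only [sq_abs, sub_sq, mul_sum, ← sum_sub_distrib]
    exact sum_congr rfl fun j _ => by ring
  linarith

lemma mul_add_mul_add_le_sq_add {a c p T R u₀ v₀ n : ℝ} (ha : 0 ≤ a) (hc : 0 ≤ c) (hp : 0 ≤ p)
    (hpT : p ≤ T) (huv : u₀ * v₀ = p ^ 2) (hsum : u₀ + v₀ ≤ R ^ 2 + 2 * T) (hn : 1 ≤ n) :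
    (a * u₀ + c) * (a * v₀ + c) ≤ (a * T + n * c) ^ 2 + a * c * R ^ 2 := by
  have hac : 0 ≤ a * c := mul_nonneg ha hc
  have hp2 : p ^ 2 ≤ T ^ 2 := pow_le_pow_left₀ hp hpT 2
  have hmix : a * c * (u₀ + v₀) ≤ a * c * R ^ 2 + 2 * n * (a * c * T) := by
    nlinarith [mul_le_mul_of_nonneg_left hsum hac,
      mul_le_mul_of_nonneg_right hn (mul_nonneg hac (hp.trans hpT))]
  nlinarith [mul_le_mul_of_nonneg_left hp2 (sq_nonneg a),
    mul_le_mul_of_nonneg_right (one_le_pow₀ (n := 2) hn) (sq_nonneg c)]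

namespace IsBraceletPair

variable {ι : Type*} [Fintype ι] {u v : ι → ℝ}

lemma two_mul_le_sum (h : IsBraceletPair u u) (hu : ∀ j, 0 ≤ u j) (j₀ : ι) :
    2 * u j₀ ≤ ∑ j, u j := by
  simpa only [Real.sqrt_mul_self (hu _)] using h j₀

lemma nontrivial (h : IsBraceletPair u u) (hu : ∀ j, 0 ≤ u j) (hpos : 0 < ∑ j, u j) :
    Nontrivial ι := by
  by_contra hι
  rw [not_nontrivial_iff_subsingleton] at hι
  obtain ⟨j₀, -, -⟩ := exists_ne_zero_of_sum_ne_zero hpos.ne'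
  have := h.two_mul_le_sum hu j₀
  rw [Fintype.sum_subsingleton _ j₀] at this hpos
  linarith

lemma mul_add_const [Nontrivial ι] (huv : IsBraceletPair u v) (huu : IsBraceletPair u u)
    (hvv : IsBraceletPair v v) (hu : ∀ j, 0 ≤ u j) (hv : ∀ j, 0 ≤ v j) {a c : ℝ} (ha : 0 ≤ a)
    (hc : 0 ≤ c) : IsBraceletPair (fun j => a * u j + c) (fun j => a * v j + c) := by
  classical
  intro j₀
  set x : ι → ℝ := fun j => √(u j)
  set y : ι → ℝ := fun j => √(v j)
  have hx : ∀ j, x j ^ 2 = u j := fun j => Real.sq_sqrt (hu j)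
  have hy : ∀ j, y j ^ 2 = v j := fun j => Real.sq_sqrt (hv j)
  have hxy : ∀ j, √(u j * v j) = x j * y j := fun j => Real.sqrt_mul (hu j) _
  have hac : 0 ≤ a * c := mul_nonneg ha hc
  set A : ι → ℝ := fun j => a * (x j * y j) + c
  set s : ι → ℝ := fun j => √(a * c) * |x j - y j|
  have hprod : ∀ j, (a * u j + c) * (a * v j + c) = A j ^ 2 + s j ^ 2 := fun j => by
    rw [← hx, ← hy]; exact mul_add_mul_add_eq_sq_add_sq hac _ _
  simp only [hprod]
  apply two_mul_sqrt_sq_add_sq_le_sum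
  set E := univ.erase j₀
  have hsplit (f : ι → ℝ) : ∑ j, f j = f j₀ + ∑ j ∈ E, f j := (add_sum_erase _ f (mem_univ j₀)).symm
  set T := ∑ j ∈ E, x j * y j
  set R := ∑ j ∈ E, |x j - y j|
  have hT : x j₀ * y j₀ ≤ T := by
    have := huv j₀
    simp only [hxy, hsplit fun j => x j * y j] at this
    linarith
  have hu₀ : u j₀ ≤ ∑ j ∈ E, u j := by linarith [huu.two_mul_le_sum hu j₀, hsplit u]
  have hv₀ : v j₀ ≤ ∑ j ∈ E, v j := by linarith [hvv.two_mul_le_sum hv j₀, hsplit v]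
  have hR : ∑ j ∈ E, u j + ∑ j ∈ E, v j ≤ R ^ 2 + 2 * T := by
    simpa only [hx, hy, sum_add_distrib] using sum_sq_add_sq_le_sq_sum_abs_sub_add E x y
  have hE : (1 : ℝ) ≤ #E := by exact_mod_cast univ_nontrivial.erase_nonempty.card_pos
  have hA : ∑ j ∈ E, A j = a * T + #E * c := by
    simp only [A, sum_add_distrib, ← mul_sum, sum_const, nsmul_eq_mul, T]
  have hs : ∑ j ∈ E, s j = √(a * c) * R := (mul_sum ..).symm
  rw [← hprod, hA, hs, mul_pow, Real.sq_sqrt hac]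
  refine mul_add_mul_add_le_sq_add ha hc (mul_nonneg (Real.sqrt_nonneg _) (Real.sqrt_nonneg _))
    hT ?_ (by linarith) hE
  rw [← hxy, Real.sq_sqrt (mul_nonneg (hu j₀) (hv j₀))]

end IsBraceletPair

/-- The set of bracelet matrices is star-shaped with respect to the flat matrix `W_d`:
if `B` is bracelet, then for every `λ ∈ [0,1]`, `(1-λ) B + λ W_d` is also bracelet. -/
theorem bracelet_starShaped {d : ℕ} (B : Matrix (Fin d) (Fin d) ℝ) (hB : Bracelet B)
    (lam : ℝ) (hlam : lam ∈ Set.Icc (0 : ℝ) 1) :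
    Bracelet ((1 - lam) • B + lam • flatMatrix d) := by
  obtain ⟨hlam₀, hlam₁⟩ := hlam
  obtain ⟨hBist, hcol, hrow⟩ := bracelet_iff.1 hB
  have ha : 0 ≤ 1 - lam := sub_nonneg.2 hlam₁
  have hc : 0 ≤ lam / d := div_nonneg hlam₀ d.cast_nonneg
  have hnn := hBist.1
  refine ⟨bistochastic_iff_mem_doublyStochastic.2 <|
      convex_doublyStochastic (bistochastic_iff_mem_doublyStochastic.1 hBist)
        (flatMatrix_mem_doublyStochastic d) ha hlam₀ (sub_add_cancel 1 lam),
    fun k l => ?_, fun j k => ?_⟩ <;> simp only [smul_add_smul_flatMatrix_apply]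
  · have := (hcol k k).nontrivial (hnn · k) (by rw [hBist.2.2 k]; exact one_pos)
    exact (hcol k l).mul_add_const (hcol k k) (hcol l l) (hnn · k) (hnn · l) ha hc
  · have := (hrow j j).nontrivial (hnn j) (by rw [hBist.2.1 j]; exact one_pos)
    exact (hrow j k).mul_add_const (hrow j j) (hrow k k) (hnn j) (hnn k) ha hc
end

section
/- For d = 3, every circulant unistochastic matrix is doubly circulant: if B is a 3×3 circulant bistochastic matrix and there exists a 3×3 unitary matrix U with |U_{jk}|² = B_{jk} for all j,k, then there also exists a 3×3 circulant unitary matrix V with |V_{jk}|² = B_{jk} for all j,k. -/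
/-- A `d × d` matrix is circulant if its entry at `(i, j)` depends only on `i - j`
modulo `d`. -/
def IsCirculant {d : ℕ} {α : Type*} (M : Matrix (Fin d) (Fin d) α) : Prop :=
  ∃ v : Fin d → α, M = Matrix.circulant v


/-!
A circulant matrix `circulant v` of size three is unitary as soon as `∑ ‖v m‖² = 1` and
`v₁ v̄₀ + v₂ v̄₁ + v₀ v̄₂ = 0`. If `B = circulant w` is unistochastic via `U`, the numbers
`Ū_{k0} U_{k1}` sum to zero (the first two columns of `U` are orthogonal) and have squared
moduli `w_k w_{k-1}`: they form a closed triangle with exactly the side lengths required of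
`v₁ v̄₀, v₂ v̄₁, v₀ v̄₂`. Rotating this triangle by a cube root of the inverse phase of the product
of its sides makes that product positive; for the rotated sides `x, y, z` the vector
`v = (√w₀, x/√w₀, z̄/√w₀)` then solves the equations, the middle one because
`x̄ z̄ = w₀ y` once `x y z = w₀ w₁ w₂`. If some `w_m` vanishes, the triangle degenerates to a point and `v = √w` works.
-/

open ComplexConjugate Matrix

theorem Matrix.sum_star_mul_eq_zero_of_mem_unitaryGroup {n α : Type*} [Fintype n] [DecidableEq n]
    [CommRing α] [StarRing α] {U : Matrix n n α} (hU : U ∈ unitaryGroup n α) {i j : n}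
    (hij : i ≠ j) : ∑ k, star (U k i) * U k j = 0 := by
  simpa [Matrix.mul_apply, Matrix.one_apply_ne hij] using
    congr_fun₂ (mem_unitaryGroup_iff'.mp hU) i j

theorem Matrix.circulant_mem_unitaryGroup_fin_three {v : Fin 3 → ℂ}
    (hnorm : ‖v 0‖ ^ 2 + ‖v 1‖ ^ 2 + ‖v 2‖ ^ 2 = 1)
    (horth : v 1 * conj (v 0) + v 2 * conj (v 1) + v 0 * conj (v 2) = 0) :
    circulant v ∈ unitaryGroup (Fin 3) ℂ := by
  have hnorm' : v 0 * conj (v 0) + v 1 * conj (v 1) + v 2 * conj (v 2) = 1 := by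
    simp only [Complex.mul_conj']; exact_mod_cast hnorm
  have horth' : conj (v 1) * v 0 + conj (v 2) * v 1 + conj (v 0) * v 2 = 0 := by
    simpa [mul_comm] using congrArg conj horth
  rw [mem_unitaryGroup_iff]
  ext i j
  fin_cases i <;> fin_cases j <;>
    simp [Matrix.mul_apply, Matrix.circulant_apply, Fin.sum_univ_three,
      show (-1 : Fin 3) = 2 from rfl, show (-2 : Fin 3) = 1 from rfl] <;>
    first
      | linear_combination hnorm'
      | linear_combination horth
      | linear_combination horth'

theorem Complex.exists_norm_eq_one_mul_pow_eq_norm (P : ℂ) {n : ℕ} (hn : n ≠ 0) :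
    ∃ u : ℂ, ‖u‖ = 1 ∧ P * u ^ n = ‖P‖ := by
  refine ⟨exp (↑(-P.arg / n) * I), norm_exp_ofReal_mul_I _, ?_⟩
  have hcancel : (P.arg : ℂ) * I + n * (↑(-P.arg / n) * I) = 0 := by
    push_cast; field_simp; ring
  rw [← exp_nat_mul]
  nth_rw 1 [← norm_mul_exp_arg_mul_I P]
  rw [mul_assoc, ← exp_add, hcancel, exp_zero, mul_one]

theorem exists_circulant_phases_of_mul_eq {w : Fin 3 → ℝ} (hw : ∀ m, 0 < w m) {x y z : ℂ}
    (hsum : x + y + z = 0) (hx : ‖x‖ ^ 2 = w 1 * w 0) (hz : ‖z‖ ^ 2 = w 0 * w 2)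
    (hxyz : x * y * z = w 0 * w 1 * w 2) :
    ∃ v : Fin 3 → ℂ, (∀ m, ‖v m‖ ^ 2 = w m) ∧
      v 1 * conj (v 0) + v 2 * conj (v 1) + v 0 * conj (v 2) = 0 := by
  set s : ℝ := √(w 0)
  have hs : (s : ℂ) ^ 2 = w 0 := by exact_mod_cast Real.sq_sqrt (hw 0).le
  have hs0 : (s : ℂ) ≠ 0 := Complex.ofReal_ne_zero.mpr (Real.sqrt_pos.mpr (hw 0)).ne'
  have hxc : x * conj x = w 1 * w 0 := by rw [Complex.mul_conj']; exact_mod_cast hx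
  have hzc : z * conj z = w 0 * w 2 := by rw [Complex.mul_conj']; exact_mod_cast hz
  have hx0 : x ≠ 0 := norm_ne_zero_iff.mp <| sq_pos_iff.mp <| hx ▸ mul_pos (hw 1) (hw 0)
  have hz0 : z ≠ 0 := norm_ne_zero_iff.mp <| sq_pos_iff.mp <| hz ▸ mul_pos (hw 0) (hw 2)
  have hconj : conj x * conj z = w 0 * y := mul_left_cancel₀ (mul_ne_zero hx0 hz0) <| by
    linear_combination (z * conj z) * hxc + ((w 1 : ℂ) * w 0) * hzc - (w 0 : ℂ) * hxyz
  refine ⟨![s, x / s, conj z / s], fun m => ?_, ?_⟩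
  · fin_cases m <;> simp [div_pow, hx, hz, s, Real.sq_sqrt (hw 0).le, (hw 0).ne']
  · simp only [cons_val_one, cons_val_zero, Complex.conj_ofReal, cons_val, map_div₀,
      Complex.conj_conj]
    field_simp
    linear_combination (s : ℂ) ^ 2 * hsum + hconj - y * hs

theorem exists_circulant_phases_of_mul_eq_zero {w : Fin 3 → ℝ} (hw : ∀ m, 0 ≤ w m)
    (h10 : w 1 * w 0 = 0) (h21 : w 2 * w 1 = 0) (h02 : w 0 * w 2 = 0) :
    ∃ v : Fin 3 → ℂ, (∀ m, ‖v m‖ ^ 2 = w m) ∧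
      v 1 * conj (v 0) + v 2 * conj (v 1) + v 0 * conj (v 2) = 0 :=
  ⟨fun m => (√(w m) : ℂ), fun m => by simp [Real.sq_sqrt (hw m)], by
    simp [← Complex.ofReal_mul, ← Real.sqrt_mul (hw _), h10, h21, h02]⟩

theorem exists_circulant_phases {w : Fin 3 → ℝ} (hw : ∀ m, 0 ≤ w m) {x y z : ℂ}
    (hsum : x + y + z = 0) (hx : ‖x‖ ^ 2 = w 1 * w 0) (hy : ‖y‖ ^ 2 = w 2 * w 1)
    (hz : ‖z‖ ^ 2 = w 0 * w 2) :
    ∃ v : Fin 3 → ℂ, (∀ m, ‖v m‖ ^ 2 = w m) ∧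
      v 1 * conj (v 0) + v 2 * conj (v 1) + v 0 * conj (v 2) = 0 := by
  by_cases hpos : ∀ m, 0 < w m
  · obtain ⟨u, hu, hxyz⟩ := Complex.exists_norm_eq_one_mul_pow_eq_norm (x * y * z) three_ne_zero
    have hnorm : ‖x * y * z‖ = w 0 * w 1 * w 2 := by
      rw [← sq_eq_sq₀ (norm_nonneg _) (mul_nonneg (mul_nonneg (hw 0) (hw 1)) (hw 2)),
        norm_mul, norm_mul, mul_pow, mul_pow, hx, hy, hz]
      ring
    refine exists_circulant_phases_of_mul_eq hpos (x := x * u) (y := y * u) (z := z * u)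
      (by linear_combination u * hsum) (by simp [hu, hx]) (by simp [hu, hz]) ?_
    rw [hnorm] at hxyz
    push_cast at hxyz
    linear_combination hxyz
  · push Not at hpos
    obtain ⟨m, hm⟩ := hpos
    have hm0 : w m = 0 := le_antisymm hm (hw m)
    have hxyz : x = 0 ∧ y = 0 ∧ z = 0 := by
      fin_cases m <;> simp_all
    obtain ⟨rfl, rfl, rfl⟩ := hxyz
    exact exists_circulant_phases_of_mul_eq_zero hw (by simpa using hx.symm)
      (by simpa using hy.symm) (by simpa using hz.symm)

/-- Every `3 × 3` circulant unistochastic matrix is doubly circulant: if `B` is a circulant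
bistochastic matrix with `|U j k|² = B j k` for some unitary `U`, then there is a circulant
unitary `V` with `|V j k|² = B j k`. -/
theorem circulant3_doubly_circulant (B : Matrix (Fin 3) (Fin 3) ℝ)
    (hB : Bistochastic B) (hc : IsCirculant B)
    (U : Matrix (Fin 3) (Fin 3) ℂ) (hU : U ∈ Matrix.unitaryGroup (Fin 3) ℂ)
    (h : ∀ j k, ‖U j k‖ ^ 2 = B j k) :
    ∃ V ∈ Matrix.unitaryGroup (Fin 3) ℂ,
      IsCirculant V ∧ ∀ j k, ‖V j k‖ ^ 2 = B j k := by
  obtain ⟨w, rfl⟩ := hc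
  have hw : ∀ m, 0 ≤ w m := fun m => by simpa using hB.1 m 0
  have hsum : w 0 + w 1 + w 2 = 1 := by simpa [Fin.sum_univ_three] using hB.2.2 0
  have ht : ∀ k, ‖star (U k 0) * U k 1‖ ^ 2 = w k * w (k - 1) := fun k => by
    rw [norm_mul, norm_star, mul_pow, h, h]; simp [circulant_apply]
  have horth := sum_star_mul_eq_zero_of_mem_unitaryGroup hU (i := 0) (j := 1) (by decide)
  rw [Fin.sum_univ_three] at horth
  obtain ⟨v, hv, hvorth⟩ := exists_circulant_phases hw (x := star (U 1 0) * U 1 1)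
    (y := star (U 2 0) * U 2 1) (z := star (U 0 0) * U 0 1)
    (by linear_combination horth) (ht 1) (ht 2) (ht 0)
  refine ⟨circulant v, circulant_mem_unitaryGroup_fin_three ?_ hvorth, ⟨v, rfl⟩,
    fun j k => hv (j - k)⟩
  rw [hv, hv, hv, hsum]
end
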